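/- arXiv:1212.1740 — 2 statements merged into one kernel-verified Lean document; each statement's English description precedes it below -/
import Mathlib

section
/- For a bipartite graph with quotient matrix P̄ = [[0,1],[1,0]] and T positive, bounded, decreasing with |T'(u*)| > 1 at the fixed point u*, the system z = P̄·(T(z_1),T(z_2)) has a solution (z_1,z_2) with z_1 ≠ z_2 — equivalently, the map T∘T has a fixed point other than u*. -/
/-!
Since `T (u*) = u*`, the chain rule gives `(T ∘ T)' (u*) = T'(u*)² > 1`, so `u*` is a repelling
fixed point of `T ∘ T` and `T (T a) > a` for some `a > u*`. As `T ∘ T` is bounded above, the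
intermediate value theorem yields a fixed point `c ≥ a` of `T ∘ T`. A strictly decreasing map has at
most one fixed point, so `T c ≠ c`, and `(T c, c)` is a genuine two-cycle.
-/

open Filter Function Set Topology

theorem HasDerivAt.eventually_nhdsGT_lt_of_pos {f : ℝ → ℝ} {f' x : ℝ} (hf : HasDerivAt f f' x)
    (hf' : 0 < f') : ∀ᶠ y in 𝓝[>] x, f x < f y := by
  have hslope : Tendsto (slope f x) (𝓝[>] x) (𝓝 f') :=
    (hasDerivAt_iff_tendsto_slope.mp hf).mono_left (nhdsGT_le_nhdsNE x)
  filter_upwards [hslope.eventually (eventually_gt_nhds hf'), self_mem_nhdsWithin]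
    with y hy hxy
  exact (slope_pos_iff_of_le (le_of_lt hxy)).mp hy

theorem Function.IsFixedPt.eventually_nhdsGT_lt_of_one_lt {g : ℝ → ℝ} {g' x : ℝ}
    (hx : IsFixedPt g x) (hg : HasDerivAt g g' x) (hg' : 1 < g') :
    ∀ᶠ y in 𝓝[>] x, y < g y := by
  filter_upwards [(hg.sub (hasDerivAt_id x)).eventually_nhdsGT_lt_of_pos (sub_pos.mpr hg')]
    with y hy
  simpa [hx.eq] using hy

theorem StrictAnti.eq_of_isFixedPt {α : Type*} [LinearOrder α] {f : α → α} (hf : StrictAnti f)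
    {a b : α} (ha : IsFixedPt f a) (hb : IsFixedPt f b) : a = b := by
  by_contra hab
  rcases lt_or_gt_of_ne hab with h | h <;> exact (hf h).not_gt (by rwa [ha.eq, hb.eq])

theorem exists_isFixedPt_ge_of_le_of_le_const {α : Type*} [ConditionallyCompleteLinearOrder α]
    [TopologicalSpace α] [OrderTopology α] [DenselyOrdered α] {f : α → α} (hf : Continuous f)
    {a M : α} (ha : a ≤ f a) (hM : ∀ x, f x ≤ M) : ∃ c, a ≤ c ∧ IsFixedPt f c := by
  obtain ⟨c, hc, hfix⟩ :=
    exists_mem_Icc_isFixedPt hf.continuousOn (ha.trans (hM a)) ha (hM M)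
  exact ⟨c, hc.1, hfix⟩

theorem bipartite_nonhomogeneous_steady_state_general
    (T : ℝ → ℝ) (hcd : ContDiff ℝ 1 T)
    (hbdd : ∃ M, ∀ x, T x ≤ M)
    (hanti : StrictAnti T)
    (ustar : ℝ) (hfix : T ustar = ustar)
    (hslope : 1 < |deriv T ustar|) :
    ∃ z1 z2 : ℝ, z1 = T z2 ∧ z2 = T z1 ∧ z1 ≠ z2 := by
  obtain ⟨M, hM⟩ := hbdd
  have hT : HasDerivAt T (deriv T ustar) ustar :=
    (hcd.differentiable one_ne_zero ustar).hasDerivAt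
  have hrepel : ∀ᶠ y in 𝓝[>] ustar, y < T^[2] y :=
    (IsFixedPt.iterate hfix 2).eventually_nhdsGT_lt_of_one_lt (hT.iterate ustar hfix 2)
      ((one_lt_sq_iff_one_lt_abs _).mpr hslope)
  obtain ⟨a, hga, hua⟩ := (hrepel.and self_mem_nhdsWithin).exists
  obtain ⟨c, hac, hc⟩ := exists_isFixedPt_ge_of_le_of_le_const
    (hcd.continuous.iterate 2) hga.le (fun x => hM (T x))
  have hcu : c ≠ ustar := (lt_of_lt_of_le (mem_Ioi.mp hua) hac).ne'
  refine ⟨T c, c, rfl, hc.eq.symm, fun hTc => hcu ?_⟩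
  exact hanti.eq_of_isFixedPt hTc hfix

theorem bipartite_nonhomogeneous_steady_state
    (T : ℝ → ℝ) (hcd : ContDiff ℝ 1 T)
    (hpos : ∀ x, 0 < T x) (hbdd : ∃ M, ∀ x, T x ≤ M)
    (hanti : StrictAnti T)
    (ustar : ℝ) (hfix : T ustar = ustar)
    (hslope : 1 < |deriv T ustar|) :
    ∃ z1 z2 : ℝ, z1 = T z2 ∧ z2 = T z1 ∧ z1 ≠ z2 :=
  bipartite_nonhomogeneous_steady_state_general T hcd hbdd hanti ustar hfix hslope
end

section
/- Let P be the scaled adjacency matrix of a connected weighted graph with equitable partition into classes O_1,...,O_r, and let Γ be a positive diagonal matrix with γ_{jj} = γ̄_i whenever j ∈ O_i. Then the partition is also equitable for PΓ, and the spectral radii coincide: ρ(PΓ) = ρ(P̄Γ̄), where Γ̄ = diag(γ̄_1,...,γ̄_r) and P̄ is the quotient matrix. In particular ρ(PΓ) < 1 iff ρ(P̄Γ̄) < 1. -/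
open Matrix Finset

/-- The spectral radius of a real square matrix: the supremum of the absolute
values of its complex eigenvalues. -/
noncomputable def specRad {n : ℕ} (A : Matrix (Fin n) (Fin n) ℝ) : ℝ :=
  sSup {x : ℝ | ∃ μ ∈ spectrum ℂ (A.map Complex.ofReal), x = ‖μ‖}

/-!
Let `Q` be the indicator matrix of the partition. Equitability says `A Q = Q B`, i.e. lifting
vectors along `Q` intertwines `B` with `A`, and a diagonal matrix constant on the classes commutes
past `Q`, so `P Γ` is again equitable with quotient `P̄ Γ̄`. Every eigenvector of `B` lifts to one
of `A`, so `σ(B) ⊆ σ(A)`. Conversely, for `A ≥ 0` the row sums of `A ^ k` are row sums of `B ^ k`,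
so `‖A ^ k‖_∞ ≤ ‖B ^ k‖_∞`, and Gelfand's formula gives `ρ(A) ≤ ρ(B)`.
-/

open scoped ENNReal

namespace Matrix

variable {ι κ R : Type*} [DecidableEq κ]

variable (R) in
def partitionMatrix [Zero R] [One R] (c : ι → κ) : Matrix ι κ R :=
  of fun u j => if c u = j then 1 else 0

section Semiring

variable [Semiring R]

theorem partitionMatrix_mulVec [Fintype κ] (c : ι → κ) (x : κ → R) :
    partitionMatrix R c *ᵥ x = x ∘ c := by
  ext u
  simp [partitionMatrix, mulVec, dotProduct]

theorem diagonal_comp_mul_partitionMatrix [Fintype ι] [DecidableEq ι] [Fintype κ]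
    (c : ι → κ) (d : κ → R) :
    diagonal (d ∘ c) * partitionMatrix R c = partitionMatrix R c * diagonal d := by
  ext u j
  rw [diagonal_mul, mul_diagonal]
  by_cases h : c u = j <;> simp [partitionMatrix, h]

theorem partitionMatrix_map {S : Type*} [Semiring S] (c : ι → κ) (f : R →+* S) :
    (partitionMatrix R c).map f = partitionMatrix S c := by
  ext u j
  simp [partitionMatrix, apply_ite f]

variable [Fintype ι] [Fintype κ]

/-- The fibres of `c` form an equitable partition for `A` with quotient matrix `B`. -/
def IsEquitablePartition (A : Matrix ι ι R) (c : ι → κ) (B : Matrix κ κ R) : Prop :=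
  A * partitionMatrix R c = partitionMatrix R c * B

variable {A : Matrix ι ι R} {c : ι → κ} {B : Matrix κ κ R}

theorem isEquitablePartition_iff :
    IsEquitablePartition A c B ↔
      ∀ u j, ∑ v ∈ univ.filter (fun v => c v = j), A u v = B (c u) j := by
  simp [IsEquitablePartition, ← Matrix.ext_iff, mul_apply, partitionMatrix, sum_filter, ite_mul]

namespace IsEquitablePartition

theorem mulVec_comp (h : IsEquitablePartition A c B) (x : κ → R) :
    A *ᵥ (x ∘ c) = (B *ᵥ x) ∘ c := by
  rw [← partitionMatrix_mulVec, mulVec_mulVec, h, ← mulVec_mulVec, partitionMatrix_mulVec]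

theorem sum_row_eq (h : IsEquitablePartition A c B) (u : ι) :
    ∑ v, A u v = ∑ j, B (c u) j := by
  simpa [mulVec, dotProduct] using congrFun (h.mulVec_comp 1) u

theorem pow [DecidableEq ι] (h : IsEquitablePartition A c B) (k : ℕ) :
    IsEquitablePartition (A ^ k) c (B ^ k) := by
  induction k with
  | zero => simp [IsEquitablePartition]
  | succ k ih =>
    unfold IsEquitablePartition at *
    rw [pow_succ, pow_succ, Matrix.mul_assoc, h, ← Matrix.mul_assoc, ih, Matrix.mul_assoc]

theorem map {S : Type*} [Semiring S] (h : IsEquitablePartition A c B) (f : R →+* S) :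
    IsEquitablePartition (A.map f) c (B.map f) := by
  unfold IsEquitablePartition at *
  rw [← partitionMatrix_map c f, ← Matrix.map_mul, ← Matrix.map_mul, h]

theorem mul_diagonal [DecidableEq ι] (h : IsEquitablePartition A c B) (d : κ → R) :
    IsEquitablePartition (A * diagonal (d ∘ c)) c (B * diagonal d) := by
  unfold IsEquitablePartition at *
  rw [Matrix.mul_assoc, diagonal_comp_mul_partitionMatrix, ← Matrix.mul_assoc, h,
    Matrix.mul_assoc]

end IsEquitablePartition

end Semiring

variable [Fintype ι] [DecidableEq ι] [Fintype κ]

theorem IsEquitablePartition.spectrum_subset {K : Type*} [Field K]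
    {A : Matrix ι ι K} {c : ι → κ} {B : Matrix κ κ K} (h : IsEquitablePartition A c B)
    (hc : Function.Surjective c) : spectrum K B ⊆ spectrum K A := by
  intro μ hμ
  rw [← spectrum_toLin', ← Module.End.hasEigenvalue_iff_mem_spectrum] at hμ ⊢
  obtain ⟨x, hx⟩ := hμ.exists_hasEigenvector
  refine Module.End.hasEigenvalue_of_hasEigenvector (x := x ∘ c) ⟨?_, ?_⟩
  · rw [Module.End.mem_eigenspace_iff, toLin'_apply, h.mulVec_comp, ← toLin'_apply,
      hx.apply_eq_smul]
    rfl
  · exact fun h0 => hx.2 (hc.injective_comp_right h0)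

end Matrix

section LinftyOpNorm

attribute [local instance] Matrix.linftyOpNormedAddCommGroup Matrix.linftyOpNormedRing
  Matrix.linftyOpNormedAlgebra

namespace Matrix

variable {ι κ : Type*} [Fintype ι] [Fintype κ]

theorem linfty_opNNNorm_map_ofReal (A : Matrix ι κ ℝ) : ‖A.map Complex.ofReal‖₊ = ‖A‖₊ := by
  simp [linfty_opNNNorm_def]

variable [DecidableEq ι] [DecidableEq κ] {A : Matrix ι ι ℝ} {c : ι → κ} {B : Matrix κ κ ℝ}

theorem IsEquitablePartition.linfty_opNNNorm_le (h : IsEquitablePartition A c B)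
    (hA : ∀ u v, 0 ≤ A u v) : ‖A‖₊ ≤ ‖B‖₊ := by
  rw [linfty_opNNNorm_def, linfty_opNNNorm_def]
  refine Finset.sup_le fun u _ =>
    le_trans ?_ (Finset.le_sup (f := fun i => ∑ j, ‖B i j‖₊) (mem_univ (c u)))
  rw [← NNReal.coe_le_coe]
  push_cast
  calc ∑ v, ‖A u v‖ = ∑ v, A u v := sum_congr rfl fun v _ => Real.norm_of_nonneg (hA u v)
    _ = ∑ j, B (c u) j := h.sum_row_eq u
    _ ≤ ∑ j, ‖B (c u) j‖ := sum_le_sum fun j _ => Real.le_norm_self _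

theorem IsEquitablePartition.spectralRadius_le (h : IsEquitablePartition A c B)
    (hA : ∀ u v, 0 ≤ A u v) :
    spectralRadius ℂ (A.map Complex.ofReal) ≤ spectralRadius ℂ (B.map Complex.ofReal) := by
  refine le_of_tendsto_of_tendsto'
    (spectrum.pow_nnnorm_pow_one_div_tendsto_nhds_spectralRadius _)
    (spectrum.pow_nnnorm_pow_one_div_tendsto_nhds_spectralRadius _) fun k => ?_
  have hnorm : ‖(A ^ k).map Complex.ofRealHom‖₊ ≤ ‖(B ^ k).map Complex.ofRealHom‖₊ :=
    (linfty_opNNNorm_map_ofReal _).trans_le <|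
      ((h.pow k).linfty_opNNNorm_le (pow_apply_nonneg hA k)).trans_eq
        (linfty_opNNNorm_map_ofReal _).symm
  rw [Matrix.map_pow, Matrix.map_pow] at hnorm
  exact ENNReal.rpow_le_rpow (by exact_mod_cast hnorm) (by positivity)

end Matrix

theorem specRad_eq_toReal_spectralRadius {n : ℕ} (A : Matrix (Fin n) (Fin n) ℝ) :
    specRad A = (spectralRadius ℂ (A.map Complex.ofReal)).toReal := by
  rcases isEmpty_or_nonempty (Fin n) with hn | hn
  · simp [specRad, spectralRadius, spectrum.of_subsingleton]
  · obtain ⟨z, hz, hzρ⟩ := spectrum.exists_nnnorm_eq_spectralRadius (A.map Complex.ofReal)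
    rw [← hzρ, ENNReal.coe_toReal, coe_nnnorm]
    refine IsGreatest.csSup_eq ⟨⟨z, hz, rfl⟩, ?_⟩
    rintro _ ⟨w, hw, rfl⟩
    have hw : (‖w‖₊ : ℝ≥0∞) ≤ spectralRadius ℂ (A.map Complex.ofReal) :=
      le_iSup₂ (α := ℝ≥0∞) w hw
    rw [← hzρ] at hw
    exact_mod_cast hw

end LinftyOpNorm

theorem Matrix.IsEquitablePartition.specRad_eq {n m : ℕ} {A : Matrix (Fin n) (Fin n) ℝ}
    {c : Fin n → Fin m} {B : Matrix (Fin m) (Fin m) ℝ} (h : IsEquitablePartition A c B)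
    (hc : Function.Surjective c) (hA : ∀ u v, 0 ≤ A u v) : specRad A = specRad B := by
  rw [specRad_eq_toReal_spectralRadius, specRad_eq_toReal_spectralRadius,
    le_antisymm (h.spectralRadius_le hA)
      (biSup_mono ((h.map Complex.ofRealHom).spectrum_subset hc))]

theorem lifted_spectral_radius_general
    (N r : ℕ) (P : Matrix (Fin N) (Fin N) ℝ)
    (hnn : ∀ i j, 0 ≤ P i j)
    (c : Fin N → Fin r) (hsurj : Function.Surjective c)
    (Pbar : Matrix (Fin r) (Fin r) ℝ)
    (heq : ∀ (u : Fin N) (j : Fin r),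
      ∑ v ∈ Finset.univ.filter (fun v => c v = j), P u v = Pbar (c u) j)
    (gbar : Fin r → ℝ) (hgpos : ∀ i, 0 < gbar i)
    (g : Fin N → ℝ) (hg : ∀ j, g j = gbar (c j)) :
    (∀ (u : Fin N) (j : Fin r),
      ∑ v ∈ Finset.univ.filter (fun v => c v = j), (P * Matrix.diagonal g) u v =
        (Pbar * Matrix.diagonal gbar) (c u) j) ∧
    specRad (P * Matrix.diagonal g) = specRad (Pbar * Matrix.diagonal gbar) ∧
    (specRad (P * Matrix.diagonal g) < 1 ↔
      specRad (Pbar * Matrix.diagonal gbar) < 1) := by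
  obtain rfl : g = gbar ∘ c := funext hg
  have hquot : IsEquitablePartition (P * diagonal (gbar ∘ c)) c (Pbar * diagonal gbar) :=
    (isEquitablePartition_iff.mpr heq).mul_diagonal gbar
  have hnonneg : ∀ u v, 0 ≤ (P * diagonal (gbar ∘ c)) u v := fun u v => by
    rw [mul_diagonal]
    exact mul_nonneg (hnn u v) (hgpos _).le
  have hρ := hquot.specRad_eq hsurj hnonneg
  exact ⟨isEquitablePartition_iff.mp hquot, hρ, by rw [hρ]⟩

theorem lifted_spectral_radius
    (N r : ℕ) (P : Matrix (Fin N) (Fin N) ℝ)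
    (hnn : ∀ i j, 0 ≤ P i j) (hrow : ∀ i, ∑ j, P i j = 1)
    (hirr : ∀ i j : Fin N, ∃ k : ℕ, 0 < k ∧ 0 < (P ^ k) i j)
    (c : Fin N → Fin r) (hsurj : Function.Surjective c)
    (Pbar : Matrix (Fin r) (Fin r) ℝ)
    (heq : ∀ (u : Fin N) (j : Fin r),
      ∑ v ∈ Finset.univ.filter (fun v => c v = j), P u v = Pbar (c u) j)
    (gbar : Fin r → ℝ) (hgpos : ∀ i, 0 < gbar i)
    (g : Fin N → ℝ) (hg : ∀ j, g j = gbar (c j))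
    (hirrbar : ∀ i j : Fin r, ∃ k : ℕ, 0 < k ∧
      0 < ((Pbar * Matrix.diagonal gbar) ^ k) i j) :
    (∀ (u : Fin N) (j : Fin r),
      ∑ v ∈ Finset.univ.filter (fun v => c v = j), (P * Matrix.diagonal g) u v =
        (Pbar * Matrix.diagonal gbar) (c u) j) ∧
    specRad (P * Matrix.diagonal g) = specRad (Pbar * Matrix.diagonal gbar) ∧
    (specRad (P * Matrix.diagonal g) < 1 ↔
      specRad (Pbar * Matrix.diagonal gbar) < 1) :=
  lifted_spectral_radius_general N r P hnn c hsurj Pbar heq gbar hgpos g hg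
end
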